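/- arXiv:1811.06963 — 5 statements merged into one kernel-verified Lean document; each statement's English description precedes it below -/
import Mathlib

section
/- Let p(ω) = a₀∏_{i=1}^N(ω - βᵢ) and q(ω) = a₀'∏_{i=1}^N(ω - βᵢ') be polynomials with all βᵢ, βᵢ' nonzero and a₀, a₀' ≠ 0. If |p(ω)|² = |q(ω)|² for all ω on the unit circle, then |a₀|²∏conj(βᵢ) = |a₀'|²∏conj(βᵢ') and the multisets {β₁, conj(β₁)⁻¹, …, β_N, conj(β_N)⁻¹} and {β₁', conj(β₁')⁻¹, …, β_N', conj(β_N')⁻¹} are equal. -/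
/-!
On the unit circle `conj ω = ω⁻¹`, so `conj (ω - b) * (-ω) = conj b * (ω - (conj b)⁻¹)` and
`‖a ∏ (ω - βᵢ)‖² (-ω)ᴺ` is the value at `ω` of the polynomial
`‖a‖² ∏ conj βᵢ · ∏ (X - βᵢ)(X - (conj βᵢ)⁻¹)`. Equal intensities make the two such polynomials agree
on the infinite unit circle, hence as polynomials; comparing leading coefficients and root multisets
gives the two conclusions.
-/

open ComplexConjugate

theorem Complex.infinite_sphere_zero_one : (Metric.sphere (0 : ℂ) 1).Infinite :=
  (isPreconnected_sphere (by simp) 0 1).infinite_of_nontrivial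
    ⟨1, by simp, -1, by simp, by norm_num⟩

open Polynomial

lemma Complex.conj_sub_mul_neg_of_norm_eq_one {ω b : ℂ} (hω : ‖ω‖ = 1) (hb : b ≠ 0) :
    conj (ω - b) * -ω = conj b * (ω - (conj b)⁻¹) := by
  have hωω : conj ω * ω = 1 := by
    rw [Complex.conj_mul', hω]; norm_num
  have hb' : conj b * (conj b)⁻¹ = 1 := mul_inv_cancel₀ (by simpa using hb)
  rw [map_sub]
  linear_combination hb' - hωω

lemma sq_norm_mul_prod_mul_neg_pow {ω : ℂ} (hω : ‖ω‖ = 1) (a : ℂ) {s : Multiset ℂ} (hs : 0 ∉ s) :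
    (‖a * (s.map (ω - ·)).prod‖ : ℂ) ^ 2 * (-ω) ^ Multiset.card s =
      (‖a‖ : ℂ) ^ 2 * (s.map conj).prod * ((s + s.map fun b => (conj b)⁻¹).map (ω - ·)).prod := by
  induction s using Multiset.induction_on with
  | empty => simp
  | cons b s ih =>
    rw [Multiset.mem_cons, not_or] at hs
    simp only [Multiset.map_cons, Multiset.prod_cons, Multiset.cons_add, Multiset.map_add,
      Multiset.card_cons, Multiset.prod_add, norm_mul, Complex.ofReal_mul, mul_pow] at ih ⊢
    set rest := (‖a‖ : ℂ) ^ 2 * (s.map conj).prod * (s.map (ω - ·)).prod *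
      (Multiset.map (ω - ·) (Multiset.map (fun b => (conj b)⁻¹) s)).prod
    linear_combination (‖ω - b‖ : ℂ) ^ 2 * -ω * ih hs.2 + ω * rest * Complex.mul_conj' (ω - b) +
      (ω - b) * rest * Complex.conj_sub_mul_neg_of_norm_eq_one hω (Ne.symm hs.1)

/-- The paper's Laurent polynomial `ω⁻ᴺ |p(ω)|²`, multiplied by `(-ω)ᴺ` to make it a polynomial. -/
noncomputable def intensityPoly (a : ℂ) (s : Multiset ℂ) : ℂ[X] :=
  C ((‖a‖ : ℂ) ^ 2 * (s.map conj).prod) * ((s + s.map fun b => (conj b)⁻¹).map (X - C ·)).prod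

lemma eval_intensityPoly (ω a : ℂ) (s : Multiset ℂ) :
    (intensityPoly a s).eval ω =
      (‖a‖ : ℂ) ^ 2 * (s.map conj).prod * ((s + s.map fun b => (conj b)⁻¹).map (ω - ·)).prod := by
  simp [intensityPoly, eval_multiset_prod, Multiset.map_map]

lemma leadingCoeff_intensityPoly (a : ℂ) (s : Multiset ℂ) :
    (intensityPoly a s).leadingCoeff = (‖a‖ : ℂ) ^ 2 * (s.map conj).prod := by
  rw [intensityPoly, leadingCoeff_mul, leadingCoeff_C,
    (monic_multiset_prod_of_monic _ _ fun b _ => monic_X_sub_C b).leadingCoeff, mul_one]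

lemma roots_intensityPoly {a : ℂ} (ha : a ≠ 0) {s : Multiset ℂ} (hs : 0 ∉ s) :
    (intensityPoly a s).roots = s + s.map fun b => (conj b)⁻¹ := by
  have hconj : (s.map conj).prod ≠ 0 := by simpa [Multiset.prod_eq_zero_iff] using hs
  rw [intensityPoly, roots_C_mul _ (mul_ne_zero (by simpa using ha) hconj),
    roots_multiset_prod_X_sub_C]

lemma intensityPoly_eq_of_sq_norm_eq {a a' : ℂ} {s t : Multiset ℂ} (hs : 0 ∉ s) (ht : 0 ∉ t)
    (hcard : Multiset.card s = Multiset.card t)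
    (h : ∀ ω : ℂ, ‖ω‖ = 1 →
      ‖a * (s.map (ω - ·)).prod‖ ^ 2 = ‖a' * (t.map (ω - ·)).prod‖ ^ 2) :
    intensityPoly a s = intensityPoly a' t := by
  refine eq_of_infinite_eval_eq _ _ (Complex.infinite_sphere_zero_one.mono fun ω hω => ?_)
  rw [mem_sphere_zero_iff_norm] at hω
  rw [Set.mem_ofPred_eq, eval_intensityPoly, eval_intensityPoly,
    ← sq_norm_mul_prod_mul_neg_pow hω a hs, ← sq_norm_mul_prod_mul_neg_pow hω a' ht, hcard]
  exact_mod_cast congrArg (fun x : ℝ => (x : ℂ) * (-ω) ^ Multiset.card t) (h ω hω)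

/-- If two degree-`N` polynomials with nonzero roots and nonzero leading coefficients
have the same intensity `|p(ω)|²` on the unit circle, then their normalizing constants
`|a₀|² ∏ conj(βᵢ)` agree and the multisets `{βᵢ, conj(βᵢ)⁻¹}` agree. -/
theorem equal_intensity_root_multisets (N : ℕ) (a₀ a₀' : ℂ)
    (ha : a₀ ≠ 0) (ha' : a₀' ≠ 0) (β β' : Fin N → ℂ)
    (hβ : ∀ i, β i ≠ 0) (hβ' : ∀ i, β' i ≠ 0)
    (h : ∀ ω : ℂ, ‖ω‖ = 1 →
      ‖a₀ * ∏ i, (ω - β i)‖ ^ 2 =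
        ‖a₀' * ∏ i, (ω - β' i)‖ ^ 2) :
    (((‖a₀‖ : ℝ) : ℂ) ^ 2) * ∏ i, conj (β i) =
        (((‖a₀'‖ : ℝ) : ℂ) ^ 2) * ∏ i, conj (β' i) ∧
      Multiset.map β Finset.univ.val +
          Multiset.map (fun i => (conj (β i))⁻¹) Finset.univ.val =
        Multiset.map β' Finset.univ.val +
          Multiset.map (fun i => (conj (β' i))⁻¹) Finset.univ.val := by
  have hs : 0 ∉ Finset.univ.val.map β := by simpa [eq_comm] using hβ
  have ht : 0 ∉ Finset.univ.val.map β' := by simpa [eq_comm] using hβ'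
  have hP : intensityPoly a₀ (Finset.univ.val.map β) = intensityPoly a₀' (Finset.univ.val.map β') :=
    intensityPoly_eq_of_sq_norm_eq hs ht (by simp) <| by
      simpa only [Multiset.map_map, Function.comp_def, Finset.prod_map_val] using h
  have hlead := congrArg leadingCoeff hP
  have hroots := congrArg roots hP
  rw [leadingCoeff_intensityPoly, leadingCoeff_intensityPoly] at hlead
  rw [roots_intensityPoly ha hs, roots_intensityPoly ha' ht] at hroots
  simp only [Multiset.map_map, Function.comp_def, Finset.prod_map_val] at hlead hroots
  exact ⟨hlead, hroots⟩
end

section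
/- Let x, x' ∈ ℂ^{N+1} have full support and the same Fourier intensity function on the unit circle, with root factorizations x̂(ω) = a₀∏(ω-βᵢ), x̂'(ω) = a₀'∏(ω-βᵢ'). Then there exist a permutation τ of {1,…,N}, a subset S ⊆ {1,…,N}, and λ ∈ ℂ with |λ| = 1, such that β'_{τ(i)} = conj(βᵢ)⁻¹ for i ∈ S, β'_{τ(i)} = βᵢ for i ∉ S, and a₀' = λ a₀ ∏_{i∈S} conj(βᵢ). -/
/-!
On the unit circle `conj ω = ω⁻¹`, so `ω ^ N * ‖x̂ ω‖ ^ 2` is the value at `ω` of the polynomial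
`|a|² ∏ (X - βᵢ) (1 - conj βᵢ X)`; equal intensities on the (infinite) circle therefore give
equal polynomials. Its roots are the `βᵢ` together with their reflections `(conj βᵢ)⁻¹`, and as
reflection is an involution, `β + refl β = β' + refl β'` as multisets forces `β'` to be `β` with
part of its roots reflected. Reflecting a root `b` divides its factor by `|b|²`, which pins down
`‖a₀'‖` and hence `a₀'` up to a unimodular scalar.
-/

open ComplexConjugate Polynomial Finset

theorem Multiset.exists_eq_add_of_add_map_eq {α : Type*} [DecidableEq α] (σ : α → α)
    {A B : Multiset α} (hσ : ∀ a ∈ A, σ (σ a) = a) (h : A + A.map σ = B + B.map σ) :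
    ∃ C D, A = C + D ∧ B = C + D.map σ := by
  induction B using Multiset.induction generalizing A with
  | empty =>
    obtain rfl : A = 0 := by simpa using congrArg Multiset.card h
    exact ⟨0, 0, by simp, by simp⟩
  | cons b B ih =>
    have hb : b ∈ A + A.map σ := h ▸ by simp
    by_cases hbA : b ∈ A
    · obtain ⟨A, rfl⟩ := Multiset.exists_cons_of_mem hbA
      obtain ⟨C, D, rfl, rfl⟩ := ih (A := A) (fun a ha => hσ a (Multiset.mem_cons_of_mem ha))
        (by simpa [Multiset.cons_add, Multiset.add_cons] using h)
      exact ⟨b ::ₘ C, D, by simp [Multiset.cons_add], by simp [Multiset.cons_add]⟩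
    · obtain ⟨a, haA, rfl⟩ := Multiset.mem_map.mp ((Multiset.mem_add.mp hb).resolve_left hbA)
      obtain ⟨A, rfl⟩ := Multiset.exists_cons_of_mem haA
      have hσa : σ (σ a) = a := hσ a (by simp)
      obtain ⟨C, D, rfl, rfl⟩ := ih (A := A) (fun x hx => hσ x (Multiset.mem_cons_of_mem hx))
        (by simpa [Multiset.cons_add, Multiset.add_cons, hσa, Multiset.cons_swap a] using h)
      exact ⟨C, a ::ₘ D, by simp [Multiset.add_cons], by simp [Multiset.add_cons]⟩

theorem Multiset.exists_le_map_eq_of_le_map {α β : Type*} {f : α → β} {s : Multiset α}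
    {D : Multiset β} (h : D ≤ s.map f) : ∃ t ≤ s, t.map f = D := by
  induction s using Quotient.inductionOn
  induction D using Quotient.inductionOn
  obtain ⟨w, hw, hsub⟩ := h
  obtain ⟨x, hx, rfl⟩ := List.sublist_map_iff.mp hsub
  exact ⟨x, hx.subperm, Quot.sound hw⟩

theorem Finset.univ_val_eq_add_compl {ι : Type*} [Fintype ι] [DecidableEq ι] (S : Finset ι) :
    univ.val = S.val + Sᶜ.val := by
  rw [← disjUnion_val _ _ disjoint_compl_right, disjUnion_eq_union, union_compl]

theorem exists_finset_map_univ_piecewise_eq {ι α : Type*} [Fintype ι] [DecidableEq ι]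
    (f : ι → α) (σ : α → α) {C D : Multiset α} (h : univ.val.map f = C + D) :
    ∃ S : Finset ι, univ.val.map (S.piecewise (σ ∘ f) f) = C + D.map σ := by
  obtain ⟨t, ht, rfl⟩ := Multiset.exists_le_map_eq_of_le_map (h ▸ Multiset.le_add_left D C)
  set S : Finset ι := ⟨t, Multiset.nodup_of_le ht univ.nodup⟩
  have hC : C = Sᶜ.val.map f := by
    rw [univ_val_eq_add_compl S, Multiset.map_add, add_comm] at h
    exact (add_right_cancel h).symm
  refine ⟨S, ?_⟩
  rw [univ_val_eq_add_compl S, Multiset.map_add, add_comm, hC, Multiset.map_map]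
  congr 1
  · exact Multiset.map_congr rfl fun i hi => piecewise_eq_of_notMem _ _ _ (mem_compl.mp hi)
  · exact Multiset.map_congr rfl fun i hi => piecewise_eq_of_mem _ _ _ hi

theorem exists_perm_apply_eq_of_map_univ_eq {ι α : Type*} [Fintype ι] [DecidableEq α]
    {f g : ι → α} (h : univ.val.map f = univ.val.map g) :
    ∃ τ : Equiv.Perm ι, ∀ i, f (τ i) = g i := by
  have hc (a : α) : Fintype.card {i // g i = a} = Fintype.card {i // f i = a} := by
    have := congrArg (Multiset.count a) h
    simp only [Multiset.count_map, eq_comm (a := a)] at this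
    rw [Fintype.card_subtype, Fintype.card_subtype]
    exact this.symm
  exact ⟨Equiv.ofFiberEquiv fun a => Fintype.equivOfCardEq (hc a), Equiv.ofFiberEquiv_map _⟩

theorem unit_circle_infinite : {ω : ℂ | ‖ω‖ = 1}.Infinite := by
  have h := (isPreconnected_sphere (E := ℂ) (by simp) 0 1).infinite_of_nontrivial
    ⟨1, by simp, -1, by simp, by norm_num⟩
  simpa [Metric.sphere] using h

noncomputable def autocorrFactor (b : ℂ) : ℂ[X] := (X - C b) * (1 - C (conj b) * X)

noncomputable def autocorrPoly {ι : Type*} [Fintype ι] (a : ℂ) (β : ι → ℂ) : ℂ[X] :=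
  C (a * conj a) * ∏ i, autocorrFactor (β i)

theorem autocorrFactor_ne_zero (b : ℂ) : autocorrFactor b ≠ 0 := by
  refine mul_ne_zero (X_sub_C_ne_zero b) fun h => ?_
  simpa using congrArg (coeff · 0) h

theorem eval_autocorrFactor {ω : ℂ} (hω : ‖ω‖ = 1) (b : ℂ) :
    (autocorrFactor b).eval ω = ω * ((ω - b) * conj (ω - b)) := by
  have hωω : ω * conj ω = 1 := by rw [Complex.mul_conj', hω]; norm_num
  simp only [autocorrFactor, eval_mul, eval_sub, eval_X, eval_C, eval_one, map_sub]
  linear_combination (b - ω) * hωω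

theorem roots_autocorrFactor {b : ℂ} (hb : b ≠ 0) :
    (autocorrFactor b).roots = {b, (conj b)⁻¹} := by
  have hlin : (1 - C (conj b) * X : ℂ[X]) = C (-conj b) * X - C (-1) := by
    simp only [map_neg, map_one]; ring
  rw [autocorrFactor, roots_mul (autocorrFactor_ne_zero b), hlin,
    roots_C_mul_X_sub_C _ (by simpa using hb), roots_X_sub_C]
  simp

theorem C_mul_autocorrFactor_inv_conj {b : ℂ} (hb : b ≠ 0) :
    C (b * conj b) * autocorrFactor (conj b)⁻¹ = autocorrFactor b := by
  have h₁ : C b * C b⁻¹ = 1 := by rw [← C_mul, mul_inv_cancel₀ hb, C_1]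
  have h₂ : C (conj b) * C (conj b)⁻¹ = 1 := by
    rw [← C_mul, mul_inv_cancel₀ (by simpa using hb), C_1]
  simp only [autocorrFactor, map_inv₀, Complex.conj_conj, C_mul]
  linear_combination (C (conj b) * C (conj b)⁻¹ * X - C (conj b) * X ^ 2) * h₁ + (X - C b) * h₂

section autocorrPoly

variable {ι : Type*} [Fintype ι]

theorem eval_autocorrPoly {ω : ℂ} (hω : ‖ω‖ = 1) (a : ℂ) (β : ι → ℂ) :
    (autocorrPoly a β).eval ω = ω ^ Fintype.card ι * ((‖a * ∏ i, (ω - β i)‖ ^ 2 : ℝ) : ℂ) := by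
  rw [Complex.ofReal_pow, ← Complex.mul_conj', autocorrPoly, eval_mul, eval_C, eval_prod]
  simp only [eval_autocorrFactor hω, prod_mul_distrib, prod_const, card_univ, map_mul, map_prod]
  ring

theorem roots_autocorrPoly {a : ℂ} (ha : a ≠ 0) {β : ι → ℂ} (hβ : ∀ i, β i ≠ 0) :
    (autocorrPoly a β).roots =
      univ.val.map β + (univ.val.map β).map fun z => (conj z)⁻¹ := by
  rw [autocorrPoly, roots_C_mul _ (by simpa using ha),
    roots_prod _ _ (prod_ne_zero_iff.mpr fun i _ => autocorrFactor_ne_zero _)]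
  simp only [roots_autocorrFactor (hβ _), Multiset.insert_eq_cons, ← Multiset.singleton_add,
    Multiset.bind_add, Multiset.bind_singleton, Multiset.map_map, Function.comp_def]

theorem autocorrPoly_comp_perm (a : ℂ) (β : ι → ℂ) (τ : Equiv.Perm ι) :
    autocorrPoly a (β ∘ τ) = autocorrPoly a β := by
  simp only [autocorrPoly, Function.comp_apply, Equiv.prod_comp τ fun i => autocorrFactor (β i)]

theorem autocorrPoly_piecewise [DecidableEq ι] (a : ℂ) {β : ι → ℂ} (S : Finset ι)
    (hβ : ∀ i ∈ S, β i ≠ 0) :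
    autocorrPoly (a * ∏ i ∈ S, conj (β i)) (S.piecewise (fun i => (conj (β i))⁻¹) β) =
      autocorrPoly a β := by
  have hfactor : ∏ i, autocorrFactor (β i) = C (∏ i ∈ S, β i * conj (β i)) *
      ∏ i, autocorrFactor (S.piecewise (fun i => (conj (β i))⁻¹) β i) := by
    rw [map_prod, ← prod_ite_mem_eq S, ← prod_mul_distrib]
    refine prod_congr rfl fun i _ => ?_
    by_cases hi : i ∈ S
    · rw [if_pos hi, piecewise_eq_of_mem _ _ _ hi, C_mul_autocorrFactor_inv_conj (hβ i hi)]
    · rw [if_neg hi, piecewise_eq_of_notMem _ _ _ hi, one_mul]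
  rw [autocorrPoly, autocorrPoly, hfactor, ← mul_assoc, ← C_mul]
  congr 2
  simp only [map_mul, map_prod, Complex.conj_conj, prod_mul_distrib]
  ring

theorem norm_eq_of_autocorrPoly_eq {a b : ℂ} {β : ι → ℂ}
    (h : autocorrPoly a β = autocorrPoly b β) : ‖a‖ = ‖b‖ := by
  have hprod : ∏ i, autocorrFactor (β i) ≠ 0 :=
    prod_ne_zero_iff.mpr fun i _ => autocorrFactor_ne_zero _
  have hsq : (‖a‖ : ℂ) ^ 2 = (‖b‖ : ℂ) ^ 2 := by
    rw [← Complex.mul_conj', ← Complex.mul_conj']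
    exact C_injective (mul_right_cancel₀ hprod h)
  exact (pow_left_inj₀ (norm_nonneg a) (norm_nonneg b) two_ne_zero).mp (by exact_mod_cast hsq)

end autocorrPoly

/-- Uniqueness of phase retrieval on the root cover: two full-support signals with
root factorizations `a₀ ∏ (ω - βᵢ)` and `a₀' ∏ (ω - βᵢ')` and equal Fourier
intensity functions differ by an element of the root ambiguity group:
a permutation of the roots, reflection of a subset `S` of roots across the unit
circle, and a unimodular scalar with `a₀' = λ a₀ ∏_{i ∈ S} conj (βᵢ)`. -/
theorem root_cover_phase_retrieval (N : ℕ) (a₀ a₀' : ℂ)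
    (ha : a₀ ≠ 0) (ha' : a₀' ≠ 0) (β β' : Fin N → ℂ)
    (hβ : ∀ i, β i ≠ 0) (hβ' : ∀ i, β' i ≠ 0)
    (h : ∀ ω : ℂ, ‖ω‖ = 1 →
      ‖a₀ * ∏ i, (ω - β i)‖ ^ 2 =
        ‖a₀' * ∏ i, (ω - β' i)‖ ^ 2) :
    ∃ (τ : Equiv.Perm (Fin N)) (S : Finset (Fin N)) (lam : ℂ), ‖lam‖ = 1 ∧
      (∀ i ∈ S, β' (τ i) = (conj (β i))⁻¹) ∧
      (∀ i ∉ S, β' (τ i) = β i) ∧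
      a₀' = lam * a₀ * ∏ i ∈ S, conj (β i) := by
  classical
  have hP : autocorrPoly a₀ β = autocorrPoly a₀' β' := by
    refine eq_of_infinite_eval_eq _ _ (unit_circle_infinite.mono fun ω (hω : ‖ω‖ = 1) => ?_)
    rw [Set.mem_ofPred_eq, eval_autocorrPoly hω, eval_autocorrPoly hω, h ω hω]
  have hroots := congrArg roots hP
  rw [roots_autocorrPoly ha hβ, roots_autocorrPoly ha' hβ'] at hroots
  obtain ⟨C, D, hβCD, hβ'CD⟩ :=
    Multiset.exists_eq_add_of_add_map_eq _ (fun z _ => by simp [map_inv₀]) hroots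
  obtain ⟨S, hS⟩ := exists_finset_map_univ_piecewise_eq β (fun z => (conj z)⁻¹) hβCD
  obtain ⟨τ, hτ⟩ := exists_perm_apply_eq_of_map_univ_eq (hβ'CD.trans hS.symm)
  have hβ'τ : β' ∘ τ = S.piecewise (fun i => (conj (β i))⁻¹) β := funext hτ
  have hnorm : ‖a₀'‖ = ‖a₀ * ∏ i ∈ S, conj (β i)‖ := by
    refine norm_eq_of_autocorrPoly_eq (β := β' ∘ τ) ?_
    rw [autocorrPoly_comp_perm, ← hP, hβ'τ, autocorrPoly_piecewise a₀ S fun i _ => hβ i]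
  have hden : a₀ * ∏ i ∈ S, conj (β i) ≠ 0 :=
    mul_ne_zero ha (prod_ne_zero_iff.mpr fun i _ => by simpa using hβ i)
  refine ⟨τ, S, a₀' / (a₀ * ∏ i ∈ S, conj (β i)), ?_,
    fun i hi => (hτ i).trans (piecewise_eq_of_mem _ _ _ hi),
    fun i hi => (hτ i).trans (piecewise_eq_of_notMem _ _ _ hi), ?_⟩
  · rw [norm_div, hnorm, div_self (norm_ne_zero_iff.mpr hden)]
  · rw [mul_assoc, div_mul_cancel₀ _ hden]
end

section
/- Let x₁ ∈ ℂ^{k+1} and x₂ ∈ ℂ^{N-k+1}, and define the convolution (x₁ ⋆ x₂)[n] = ∑_ℓ x₁[ℓ]·conj(x₂[n-ℓ]) as a vector in ℂ^{N+1}. Then x = x₁ ⋆ x₂ and x' = x₁ ⋆ ẋ₂ (where ẋ₂ is the conjugate-reflection of x₂) have the same Fourier intensity function: |x̂(ω)|² = |x̂'(ω)|² for all ω on the unit circle. -/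
open ComplexConjugate

/-- The (conjugate) convolution `(u ⋆ v)[n] = ∑_ℓ u[ℓ] conj(v[n-ℓ])` of signals
indexed by `ℕ` (extended by zero). -/
noncomputable def conv (u v : ℕ → ℂ) (n : ℕ) : ℂ :=
  ∑ ℓ ∈ Finset.range (n + 1), u ℓ * conj (v (n - ℓ))

/-- The conjugate-reflection of a signal supported in `[0, m]`:
`v̇[n] = conj (v[m-n])` for `n ≤ m`, zero otherwise. -/
noncomputable def conjReflect (m : ℕ) (v : ℕ → ℂ) (n : ℕ) : ℂ :=
  if n ≤ m then conj (v (m - n)) else 0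

/-- The Fourier transform `∑_{n=0}^N v[n] ω^n` of a signal supported in `[0, N]`. -/
noncomputable def fourierSig (N : ℕ) (v : ℕ → ℂ) (ω : ℂ) : ℂ :=
  ∑ n ∈ Finset.range (N + 1), v n * ω ^ n

/-!
Reading a signal supported in `[0, K]` as the coefficients of a polynomial of degree `≤ K`,
the convolution `u ⋆ v` has the coefficients of the product of `u` and of the coefficientwise
conjugate `v̄`, so its Fourier transform factors as `û(ω) · v̄̂(ω)`. On the unit circle
`conj ω = ω⁻¹`, so conjugate-reflecting `v` in `[0, M]` replaces the factor `v̄̂(ω)` by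
`ω ^ M · conj (v̄̂(ω))`, which has the same modulus.
-/

open Finset Polynomial

noncomputable def sigPoly (K : ℕ) (u : ℕ → ℂ) : ℂ[X] :=
  ∑ i ∈ range (K + 1), C (u i) * X ^ i

lemma eval_sigPoly (K : ℕ) (u : ℕ → ℂ) (ω : ℂ) :
    (sigPoly K u).eval ω = fourierSig K u ω := by
  simp [sigPoly, fourierSig, eval_finsetSum]

lemma coeff_sigPoly {K : ℕ} {u : ℕ → ℂ} (hu : ∀ i, K < i → u i = 0) (n : ℕ) :
    (sigPoly K u).coeff n = u n := by
  by_cases hn : n ≤ K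
  · simp [sigPoly, hn]
  · simp [sigPoly, hn, hu n (by omega)]

lemma natDegree_sigPoly_le (K : ℕ) (u : ℕ → ℂ) : (sigPoly K u).natDegree ≤ K := by
  refine natDegree_sum_le_of_forall_le _ _ fun i hi => ?_
  exact (natDegree_C_mul_X_pow_le _ _).trans (mem_range_succ_iff.mp hi)

lemma conv_eq_coeff_mul {K M : ℕ} {u v : ℕ → ℂ} (hu : ∀ i, K < i → u i = 0)
    (hv : ∀ i, M < i → v i = 0) (n : ℕ) :
    conv u v n = (sigPoly K u * sigPoly M (fun m => conj (v m))).coeff n := by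
  have hv' : ∀ i, M < i → conj (v i) = 0 := fun i hi => by simp [hv i hi]
  simp only [coeff_mul, coeff_sigPoly hu, coeff_sigPoly hv', conv,
    Nat.sum_antidiagonal_eq_sum_range_succ_mk]

theorem fourierSig_conv {K M : ℕ} {u v : ℕ → ℂ} (hu : ∀ i, K < i → u i = 0)
    (hv : ∀ i, M < i → v i = 0) (ω : ℂ) :
    fourierSig (K + M) (conv u v) ω =
      fourierSig K u ω * fourierSig M (fun m => conj (v m)) ω := by
  have hdeg : (sigPoly K u * sigPoly M (fun m => conj (v m))).natDegree < K + M + 1 :=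
    Nat.lt_succ_of_le <| natDegree_mul_le.trans <|
      add_le_add (natDegree_sigPoly_le K u) (natDegree_sigPoly_le M _)
  rw [← eval_sigPoly K u, ← eval_sigPoly M, ← eval_mul, eval_eq_sum_range' hdeg, fourierSig]
  simp only [conv_eq_coeff_mul hu hv]

lemma pow_sub_eq_mul_conj_pow {ω : ℂ} (hω : ‖ω‖ = 1) {j M : ℕ} (hj : j ≤ M) :
    ω ^ (M - j) = ω ^ M * conj ω ^ j := by
  have hω0 : ω ≠ 0 := norm_ne_zero_iff.mp (by simp [hω])
  rw [pow_sub₀ ω hω0 hj, ← inv_pow, Complex.inv_eq_conj hω]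

lemma conjReflect_eq_zero {M : ℕ} (v : ℕ → ℂ) {i : ℕ} (hi : M < i) :
    conjReflect M v i = 0 :=
  if_neg (not_le.mpr hi)

theorem fourierSig_conj_conjReflect (M : ℕ) (v : ℕ → ℂ) {ω : ℂ} (hω : ‖ω‖ = 1) :
    fourierSig M (fun m => conj (conjReflect M v m)) ω =
      ω ^ M * conj (fourierSig M (fun m => conj (v m)) ω) := by
  calc fourierSig M (fun m => conj (conjReflect M v m)) ω
      = ∑ m ∈ range (M + 1), v (M - m) * ω ^ m := by
        refine sum_congr rfl fun m hm => ?_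
        simp [conjReflect, mem_range_succ_iff.mp hm]
    _ = ∑ j ∈ range (M + 1), v j * ω ^ (M - j) := by
        rw [← sum_range_reflect]
        refine sum_congr rfl fun j hj => ?_
        rw [Nat.add_sub_cancel, Nat.sub_sub_self (mem_range_succ_iff.mp hj)]
    _ = ω ^ M * conj (fourierSig M (fun m => conj (v m)) ω) := by
        simp only [fourierSig, map_sum, map_mul, map_pow, Complex.conj_conj, mul_sum]
        refine sum_congr rfl fun j hj => ?_
        rw [pow_sub_eq_mul_conj_pow hω (mem_range_succ_iff.mp hj)]
        ring

/-- For `x₁ ∈ ℂ^{k+1}` and `x₂ ∈ ℂ^{N-k+1}`, the signals `x₁ ⋆ x₂` and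
`x₁ ⋆ ẋ₂` have the same Fourier intensity function on the unit circle. -/
theorem conv_conjReflect_same_intensity (N k : ℕ) (hk : k ≤ N) (x₁ x₂ : ℕ → ℂ)
    (h1 : ∀ i, k < i → x₁ i = 0) (h2 : ∀ i, N - k < i → x₂ i = 0) :
    ∀ ω : ℂ, ‖ω‖ = 1 →
      ‖fourierSig N (conv x₁ x₂) ω‖ ^ 2 =
        ‖fourierSig N (conv x₁ (conjReflect (N - k) x₂)) ω‖ ^ 2 := by
  intro ω hω
  obtain ⟨M, rfl⟩ := Nat.exists_eq_add_of_le hk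
  rw [Nat.add_sub_cancel_left] at h2 ⊢
  rw [fourierSig_conv h1 h2, fourierSig_conv h1 fun i => conjReflect_eq_zero x₂,
    fourierSig_conj_conjReflect M x₂ hω]
  simp [hω]
end

section
/- Let x, x' ∈ ℂ^{N+1} have full support. Then |x̂(ω)|² = |x̂'(ω)|² for all ω on the unit circle if and only if there exist k ∈ {0,…,N}, vectors x₁ ∈ ℂ^{k+1}, x₂ ∈ ℂ^{N-k+1}, and λ ∈ S¹ such that x = x₁ ⋆ x₂ and x' = λ·(x₁ ⋆ ẋ₂), where ⋆ denotes the convolution (u ⋆ v)[n] = ∑_ℓ u[ℓ]·conj(v[n-ℓ]) and ẋ₂ is the conjugate-reflection of x₂. -/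
open ComplexConjugate

/-!
A signal supported in `[0, m]` is the coefficient sequence of a polynomial of degree `≤ m`; then
`conv` is the product `p * q̄`, and the conjugate reflection is `p† = X ^ m * p̄ (1 / X)`
(`conjReflectPoly m p`), which on the unit circle satisfies `p† ω = ω ^ m * conj (p ω)`. Equal
intensities of `P` and `Q` therefore say `P * P† = Q * Q†`. Dividing out a greatest common factor
`G` leaves relatively prime `H`, `K` with `H * H† = K * K†`, so `H ∣ K†`; as `deg H` is the full
`deg P - deg G`, comparing degrees gives `K† = d • H`, hence `K = conj d • H†`, and `|d| = 1`
follows by cancelling `H * H†`. Thus `P = G * H` and `Q = conj d • G * H†`.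
-/

open Polynomial

section StarRing

variable {R : Type*} [CommSemiring R] [StarRing R]

noncomputable def conjReflectPoly (m : ℕ) (p : R[X]) : R[X] :=
  reflect m (p.map (starRingEnd R))

theorem coeff_conjReflectPoly (m : ℕ) (p : R[X]) (n : ℕ) :
    (conjReflectPoly m p).coeff n = star (p.coeff (revAt m n)) := by
  rw [conjReflectPoly, coeff_reflect, coeff_map, starRingEnd_apply]

theorem map_star_map_star (p : R[X]) :
    (p.map (starRingEnd R)).map (starRingEnd R) = p := by
  ext n
  simp only [coeff_map, starRingEnd_self_apply]

theorem map_star_conjReflectPoly (m : ℕ) (p : R[X]) :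
    (conjReflectPoly m p).map (starRingEnd R) = conjReflectPoly m (p.map (starRingEnd R)) := by
  rw [conjReflectPoly, conjReflectPoly, reflect_map, map_star_map_star, map_star_map_star]

theorem conjReflectPoly_conjReflectPoly (m : ℕ) (p : R[X]) :
    conjReflectPoly m (conjReflectPoly m p) = p := by
  ext n
  simp only [coeff_conjReflectPoly, revAt_invol, star_star]

theorem conjReflectPoly_mul {a b : ℕ} {p q : R[X]} (hp : p.natDegree ≤ a) (hq : q.natDegree ≤ b) :
    conjReflectPoly (a + b) (p * q) = conjReflectPoly a p * conjReflectPoly b q := by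
  rw [conjReflectPoly, Polynomial.map_mul]
  exact reflect_mul _ _ (natDegree_map_le.trans hp) (natDegree_map_le.trans hq)

theorem conjReflectPoly_C_mul (m : ℕ) (c : R) (p : R[X]) :
    conjReflectPoly m (C c * p) = C (star c) * conjReflectPoly m p := by
  rw [conjReflectPoly, Polynomial.map_mul, map_C, reflect_C_mul, conjReflectPoly, starRingEnd_apply]

theorem natDegree_conjReflectPoly_le {m : ℕ} {p : R[X]} (hp : p.natDegree ≤ m) :
    (conjReflectPoly m p).natDegree ≤ m :=
  natDegree_le_iff_coeff_eq_zero.mpr fun n hn => by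
    rw [coeff_conjReflectPoly, revAt_eq_self_of_lt (by exact_mod_cast hn),
      coeff_eq_zero_of_natDegree_lt (by omega), star_zero]

theorem conjReflectPoly_ne_zero {m : ℕ} {p : R[X]} (hp : p ≠ 0) : conjReflectPoly m p ≠ 0 := by
  intro h
  rw [← conjReflectPoly_conjReflectPoly m p, h, conjReflectPoly, Polynomial.map_zero,
    reflect_zero] at hp
  exact hp rfl

end StarRing

theorem exists_natDegree_le_coeff_eq {R : Type*} [Semiring R] {K : ℕ} {v : ℕ → R}
    (hv : ∀ i, K < i → v i = 0) : ∃ p : R[X], p.natDegree ≤ K ∧ p.coeff = v := by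
  refine ⟨∑ i ∈ Finset.range (K + 1), monomial i (v i), ?_, ?_⟩
  · exact natDegree_sum_le_of_forall_le _ _ fun i hi => (natDegree_monomial_le _).trans
      (Nat.lt_succ_iff.mp (Finset.mem_range.mp hi))
  · ext n
    simp only [finsetSum_coeff, coeff_monomial, Finset.sum_ite_eq', Finset.mem_range]
    split_ifs with hn
    · rfl
    · exact (hv n (by omega)).symm

theorem fourierSig_coeff {N : ℕ} {p : ℂ[X]} (hp : p.natDegree ≤ N) (ω : ℂ) :
    fourierSig N p.coeff ω = p.eval ω :=
  (eval_eq_sum_range' (Nat.lt_succ_of_le hp) ω).symm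

theorem conv_coeff (p q : ℂ[X]) : conv p.coeff q.coeff = (p * q.map (starRingEnd ℂ)).coeff := by
  ext n
  rw [coeff_mul, Finset.Nat.sum_antidiagonal_eq_sum_range_succ_mk, conv]
  simp only [coeff_map]

theorem conjReflect_coeff {m : ℕ} {p : ℂ[X]} (hp : p.natDegree ≤ m) :
    conjReflect m p.coeff = (conjReflectPoly m p).coeff := by
  ext n
  rw [conjReflect, coeff_conjReflectPoly]
  split_ifs with hn
  · rw [revAt_le hn]; rfl
  · rw [revAt_eq_self_of_lt (by omega), coeff_eq_zero_of_natDegree_lt (by omega), star_zero]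

theorem eval_conjReflectPoly {m : ℕ} {p : ℂ[X]} (hp : p.natDegree ≤ m) {ω : ℂ} (hω : ‖ω‖ = 1) :
    (conjReflectPoly m p).eval ω = ω ^ m * conj (p.eval ω) := by
  have hω0 : ω ≠ 0 := norm_ne_zero_iff.mp (by simp [hω])
  let := invertibleOfNonzero (inv_ne_zero hω0)
  have key := eval₂_reflect_mul_pow (RingHom.id ℂ) ω⁻¹ m (p.map (starRingEnd ℂ))
    (natDegree_map_le.trans hp)
  rw [invOf_eq_inv, inv_inv, eval₂_id, eval₂_id, Complex.inv_eq_conj hω, eval_map,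
    eval₂_at_apply] at key
  rw [conjReflectPoly, ← key, mul_left_comm, ← mul_pow, Complex.mul_conj,
    Complex.normSq_eq_norm_sq, hω]
  simp

theorem norm_eval_conjReflectPoly {m : ℕ} {p : ℂ[X]} (hp : p.natDegree ≤ m) {ω : ℂ}
    (hω : ‖ω‖ = 1) : ‖(conjReflectPoly m p).eval ω‖ = ‖p.eval ω‖ := by
  rw [eval_conjReflectPoly hp hω, norm_mul, norm_pow, hω, one_pow, one_mul, Complex.norm_conj]

theorem Complex.infinite_sphere (z : ℂ) {r : ℝ} (hr : 0 < r) : (Metric.sphere z r).Infinite :=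
  (isPreconnected_sphere (by simp [Complex.rank_real_complex]) z r).infinite_of_nontrivial
    ⟨z + r, by simp [hr.le], z - r, by simp [hr.le], fun h => by
      have := congrArg Complex.re h
      simp only [add_re, sub_re, ofReal_re] at this
      linarith⟩

theorem mul_conjReflectPoly_eq_of_norm_eval_eq {N : ℕ} {P Q : ℂ[X]} (hP : P.natDegree ≤ N)
    (hQ : Q.natDegree ≤ N) (h : ∀ ω : ℂ, ‖ω‖ = 1 → ‖P.eval ω‖ = ‖Q.eval ω‖) :
    P * conjReflectPoly N P = Q * conjReflectPoly N Q := by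
  refine eq_of_infinite_eval_eq _ _ ((Complex.infinite_sphere 0 one_pos).mono fun ω hω => ?_)
  rw [mem_sphere_zero_iff_norm] at hω
  have key {p : ℂ[X]} (hp : p.natDegree ≤ N) :
      (p * conjReflectPoly N p).eval ω = ω ^ N * (‖p.eval ω‖ ^ 2 : ℝ) := by
    rw [eval_mul, eval_conjReflectPoly hp hω, mul_left_comm, Complex.mul_conj,
      Complex.normSq_eq_norm_sq]
  simp only [Set.mem_ofPred_eq, key hP, key hQ, h ω hω]

theorem exists_eq_C_mul_conjReflectPoly_of_isRelPrime {m : ℕ} {P Q : ℂ[X]}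
    (hPQ : IsRelPrime P Q) (hP0 : P ≠ 0) (hP : P.natDegree = m) (hQ : Q.natDegree ≤ m)
    (h : P * conjReflectPoly m P = Q * conjReflectPoly m Q) :
    ∃ c : ℂ, ‖c‖ = 1 ∧ Q = C c * conjReflectPoly m P := by
  have hPP0 : P * conjReflectPoly m P ≠ 0 := mul_ne_zero hP0 (conjReflectPoly_ne_zero hP0)
  have hQ0 : Q ≠ 0 := by rintro rfl; exact hPP0 (by rw [h, zero_mul])
  obtain ⟨r, hr⟩ : P ∣ conjReflectPoly m Q := hPQ.dvd_of_dvd_mul_left ⟨_, h.symm⟩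
  have hr0 : r ≠ 0 := by rintro rfl; exact conjReflectPoly_ne_zero hQ0 (by rw [hr, mul_zero])
  have hrdeg : r.natDegree = 0 := by
    have := natDegree_conjReflectPoly_le hQ
    rw [hr, natDegree_mul hP0 hr0] at this
    omega
  obtain ⟨d, rfl⟩ : ∃ d, r = C d := ⟨r.coeff 0, eq_C_of_natDegree_eq_zero hrdeg⟩
  have hQd : Q = C (conj d) * conjReflectPoly m P := by
    rw [← conjReflectPoly_conjReflectPoly m Q, hr, mul_comm, conjReflectPoly_C_mul]; rfl
  have hdd : C (conj d * d) * (P * conjReflectPoly m P) = 1 * (P * conjReflectPoly m P) :=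
    calc C (conj d * d) * (P * conjReflectPoly m P)
        = C (conj d) * conjReflectPoly m P * (P * C d) := by rw [C_mul]; ring
      _ = P * conjReflectPoly m P := by rw [← hr, ← hQd, h]
      _ = 1 * (P * conjReflectPoly m P) := (one_mul _).symm
  have hd : (‖d‖ ^ 2 : ℂ) = 1 := by
    rw [← Complex.conj_mul', ← C_inj, C_1]
    exact mul_right_cancel₀ hPP0 hdd
  refine ⟨conj d, ?_, hQd⟩
  rw [Complex.norm_conj]
  exact (pow_eq_one_iff_of_nonneg (norm_nonneg d) two_ne_zero).mp (by exact_mod_cast hd)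

theorem exists_factorization_of_mul_conjReflectPoly_eq {P Q : ℂ[X]} (hP0 : P ≠ 0)
    (hQ : Q.natDegree ≤ P.natDegree)
    (h : P * conjReflectPoly P.natDegree P = Q * conjReflectPoly P.natDegree Q) :
    ∃ (G H : ℂ[X]) (c : ℂ), ‖c‖ = 1 ∧ P = G * H ∧
      Q = C c * (G * conjReflectPoly H.natDegree H) := by
  obtain ⟨H, K, G, hHK, rfl, rfl⟩ := UniqueFactorizationMonoid.exists_reduced_factors P hP0 Q
  have hG0 : G ≠ 0 := left_ne_zero_of_mul hP0
  have hH0 : H ≠ 0 := right_ne_zero_of_mul hP0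
  have hK0 : K ≠ 0 := by
    rintro rfl
    exact mul_ne_zero hP0 (conjReflectPoly_ne_zero hP0) (by rw [h, mul_zero, zero_mul])
  rw [natDegree_mul hG0 hH0, natDegree_mul hG0 hK0, add_le_add_iff_left] at hQ
  rw [natDegree_mul hG0 hH0, conjReflectPoly_mul le_rfl le_rfl, conjReflectPoly_mul le_rfl hQ] at h
  have hGG0 : G * conjReflectPoly G.natDegree G ≠ 0 := mul_ne_zero hG0 (conjReflectPoly_ne_zero hG0)
  have hHK' : H * conjReflectPoly H.natDegree H = K * conjReflectPoly H.natDegree K :=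
    mul_left_cancel₀ hGG0 (by linear_combination h)
  obtain ⟨c, hc, rfl⟩ := exists_eq_C_mul_conjReflectPoly_of_isRelPrime hHK hH0 rfl hQ hHK'
  exact ⟨G, H, c, hc, rfl, by ring⟩

theorem beinert_plonka_characterization_general (N : ℕ) (x x' : ℕ → ℂ)
    (hxsupp : ∀ i, N < i → x i = 0) (hx'supp : ∀ i, N < i → x' i = 0)
    (hN : x N ≠ 0) :
    (∀ ω : ℂ, ‖ω‖ = 1 →
        ‖fourierSig N x ω‖ ^ 2 = ‖fourierSig N x' ω‖ ^ 2) ↔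
      ∃ (k : ℕ) (_ : k ≤ N) (x₁ x₂ : ℕ → ℂ) (lam : ℂ),
        (∀ i, k < i → x₁ i = 0) ∧ (∀ i, N - k < i → x₂ i = 0) ∧ ‖lam‖ = 1 ∧
        (∀ n, x n = conv x₁ x₂ n) ∧
        (∀ n, x' n = lam * conv x₁ (conjReflect (N - k) x₂) n) := by
  obtain ⟨P, hPN, rfl⟩ := exists_natDegree_le_coeff_eq hxsupp
  obtain ⟨Q, hQN, rfl⟩ := exists_natDegree_le_coeff_eq hx'supp
  have hPdeg : P.natDegree = N := hPN.antisymm (le_natDegree_of_ne_zero hN)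
  have hP0 : P ≠ 0 := by rintro rfl; exact hN (coeff_zero N)
  simp only [fourierSig_coeff hPN, fourierSig_coeff hQN,
    sq_eq_sq₀ (norm_nonneg _) (norm_nonneg _)]
  constructor
  · intro h
    obtain ⟨G, H, c, hc, rfl, rfl⟩ := exists_factorization_of_mul_conjReflectPoly_eq hP0
      (hPdeg ▸ hQN) (hPdeg ▸ mul_conjReflectPoly_eq_of_norm_eval_eq hPN hQN h)
    have hGH : G.natDegree + H.natDegree = N :=
      hPdeg ▸ (natDegree_mul (left_ne_zero_of_mul hP0) (right_ne_zero_of_mul hP0)).symm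
    have hH : N - G.natDegree = H.natDegree := by omega
    refine ⟨G.natDegree, by omega, G.coeff, (H.map (starRingEnd ℂ)).coeff, c,
      fun i hi => coeff_eq_zero_of_natDegree_lt hi,
      fun i hi => coeff_eq_zero_of_natDegree_lt (natDegree_map_le.trans_lt (hH ▸ hi)), hc,
      fun n => by rw [conv_coeff, map_star_map_star], fun n => ?_⟩
    rw [hH, conjReflect_coeff natDegree_map_le, conv_coeff, map_star_conjReflectPoly,
      map_star_map_star, coeff_C_mul]
  · rintro ⟨k, -, x₁, x₂, lam, h₁, h₂, hlam, hx, hx'⟩ ω hω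
    obtain ⟨p, -, rfl⟩ := exists_natDegree_le_coeff_eq h₁
    obtain ⟨q, hq, rfl⟩ := exists_natDegree_le_coeff_eq h₂
    have hP : P = p * q.map (starRingEnd ℂ) := ext fun n => by rw [hx, conv_coeff]
    have hQ : Q = C lam * (p * conjReflectPoly (N - k) (q.map (starRingEnd ℂ))) :=
      ext fun n => by
        rw [hx', conjReflect_coeff hq, conv_coeff, map_star_conjReflectPoly, coeff_C_mul]
    simp only [hP, hQ, eval_mul, eval_C, norm_mul, hlam, one_mul,
      norm_eval_conjReflectPoly (natDegree_map_le.trans hq) hω]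

/-- Beinert–Plonka characterization: two full-support signals of length `N+1` have
the same Fourier intensity function iff `x = x₁ ⋆ x₂` and `x' = λ (x₁ ⋆ ẋ₂)` for
some factorization with `x₁ ∈ ℂ^{k+1}`, `x₂ ∈ ℂ^{N-k+1}` and unimodular `λ`. -/
theorem beinert_plonka_characterization (N : ℕ) (x x' : ℕ → ℂ)
    (hxsupp : ∀ i, N < i → x i = 0) (hx'supp : ∀ i, N < i → x' i = 0)
    (h0 : x 0 ≠ 0) (hN : x N ≠ 0) (h0' : x' 0 ≠ 0) (hN' : x' N ≠ 0) :
    (∀ ω : ℂ, ‖ω‖ = 1 →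
        ‖fourierSig N x ω‖ ^ 2 = ‖fourierSig N x' ω‖ ^ 2) ↔
      ∃ (k : ℕ) (_ : k ≤ N) (x₁ x₂ : ℕ → ℂ) (lam : ℂ),
        (∀ i, k < i → x₁ i = 0) ∧ (∀ i, N - k < i → x₂ i = 0) ∧ ‖lam‖ = 1 ∧
        (∀ n, x n = conv x₁ x₂ n) ∧
        (∀ n, x' n = lam * conv x₁ (conjReflect (N - k) x₂) n) :=
  beinert_plonka_characterization_general N x x' hxsupp hx'supp hN
end

section
/- The action of the group G = S¹ ⋉ (μ₂^N ⋊ S_N) on ℂ* × (ℂ*)^N defined by: λ ∈ S¹ scaling a₀, τ ∈ S_N permuting (β₁,…,β_N), and the i-th generator sᵢ of μ₂^N sending (a₀, β₁,…,β_N) to (a₀|βᵢ|, β₁,…,conj(βᵢ)⁻¹,…,β_N), is a well-defined group action (in particular each sᵢ is an involution and τ∘sᵢ = s_{τ(i)}∘τ), and every element of G preserves the Fourier intensity function of the associated signal a₀∏(ω - βᵢ). -/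
open ComplexConjugate

/-- The scaling part of the root ambiguity group: `λ` acts on `(a₀, β)` by scaling `a₀`. -/
noncomputable def scaleAct {N : ℕ} (lam : ℂ) (p : ℂ × (Fin N → ℂ)) : ℂ × (Fin N → ℂ) :=
  (lam * p.1, p.2)

/-- The permutation part of the root ambiguity group: `τ` permutes the roots. -/
noncomputable def permAct {N : ℕ} (τ : Equiv.Perm (Fin N)) (p : ℂ × (Fin N → ℂ)) :
    ℂ × (Fin N → ℂ) :=
  (p.1, p.2 ∘ τ)

/-- The `i`-th reflection generator `sᵢ` of `μ₂^N`: it replaces `βᵢ` by `conj(βᵢ)⁻¹`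
and rescales the leading coefficient by `|βᵢ|`. -/
noncomputable def reflAct {N : ℕ} (i : Fin N) (p : ℂ × (Fin N → ℂ)) : ℂ × (Fin N → ℂ) :=
  (p.1 * ((‖p.2 i‖ : ℝ) : ℂ), Function.update p.2 i ((conj (p.2 i))⁻¹))

/-- The Fourier intensity function of the signal associated to a point of the root
cover: `ω ↦ |a₀ ∏ (ω - βᵢ)|²`. -/
noncomputable def rootIntensity {N : ℕ} (p : ℂ × (Fin N → ℂ)) (ω : ℂ) : ℝ :=
  ‖p.1 * ∏ i, (ω - p.2 i)‖ ^ 2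

/-!
On the unit circle `conj ω = ω⁻¹`, so `conj β · (ω - (conj β)⁻¹) = ω · conj (β - ω)`; taking norms,
`|β| · |ω - (conj β)⁻¹| = |ω - β|`. Hence replacing the root `βᵢ` by `conj(βᵢ)⁻¹` while
multiplying `a₀` by `|βᵢ|` leaves `|a₀ ∏ (ω - βᵢ)|` unchanged on `S¹`.
-/

lemma norm_mul_norm_sub_inv_conj {β ω : ℂ} (hβ : β ≠ 0) (hω : ‖ω‖ = 1) :
    ‖β‖ * ‖ω - (conj β)⁻¹‖ = ‖ω - β‖ := by
  have hω₀ : ω ≠ 0 := norm_ne_zero_iff.mp (by rw [hω]; exact one_ne_zero)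
  have hβ' : conj β ≠ 0 := (map_ne_zero _).mpr hβ
  have key : conj β * (ω - (conj β)⁻¹) = ω * conj (β - ω) := by
    rw [map_sub, ← Complex.inv_eq_conj hω]
    field_simp
  calc ‖β‖ * ‖ω - (conj β)⁻¹‖ = ‖conj β * (ω - (conj β)⁻¹)‖ := by
        rw [norm_mul, Complex.norm_conj]
    _ = ‖ω - β‖ := by rw [key, norm_mul, hω, one_mul, Complex.norm_conj, norm_sub_rev]

lemma prod_sub_update_eq_mul_prod_erase {ι R : Type*} [Fintype ι] [DecidableEq ι] [CommRing R]
    (β : ι → R) (i : ι) (b ω : R) :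
    ∏ x, (ω - Function.update β i b x) = (ω - b) * ∏ x ∈ Finset.univ.erase i, (ω - β x) := by
  rw [← Finset.mul_prod_erase _ _ (Finset.mem_univ i), Function.update_self]
  congr 1
  refine Finset.prod_congr rfl fun x hx ↦ ?_
  rw [Function.update_of_ne (Finset.ne_of_mem_erase hx)]

variable {N : ℕ}

lemma reflAct_reflAct (i : Fin N) {p : ℂ × (Fin N → ℂ)} (hp : p.2 i ≠ 0) :
    reflAct i (reflAct i p) = p := by
  have hnorm : ((‖p.2 i‖ : ℝ) : ℂ) ≠ 0 := by exact_mod_cast norm_ne_zero_iff.mpr hp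
  refine Prod.ext ?_ ?_
  · simp only [reflAct, Function.update_self, norm_inv, Complex.norm_conj, Complex.ofReal_inv]
    field_simp
  · simp [reflAct]

lemma permAct_reflAct (τ : Equiv.Perm (Fin N)) (j : Fin N) (p : ℂ × (Fin N → ℂ)) :
    permAct τ (reflAct (τ j) p) = reflAct j (permAct τ p) := by
  simp only [permAct, reflAct, Function.comp_apply, Function.update_comp_equiv,
    Equiv.symm_apply_apply]

lemma rootIntensity_scaleAct {lam : ℂ} (hlam : ‖lam‖ = 1) (p : ℂ × (Fin N → ℂ)) (ω : ℂ) :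
    rootIntensity (scaleAct lam p) ω = rootIntensity p ω := by
  simp [rootIntensity, scaleAct, mul_assoc, hlam]

lemma rootIntensity_permAct (τ : Equiv.Perm (Fin N)) (p : ℂ × (Fin N → ℂ)) (ω : ℂ) :
    rootIntensity (permAct τ p) ω = rootIntensity p ω := by
  simp only [rootIntensity, permAct, Function.comp_apply, Equiv.prod_comp τ (fun i ↦ ω - p.2 i)]

lemma rootIntensity_reflAct (i : Fin N) {p : ℂ × (Fin N → ℂ)} (hp : p.2 i ≠ 0) {ω : ℂ}
    (hω : ‖ω‖ = 1) : rootIntensity (reflAct i p) ω = rootIntensity p ω := by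
  simp only [rootIntensity, reflAct]
  rw [prod_sub_update_eq_mul_prod_erase, ← Finset.mul_prod_erase _ _ (Finset.mem_univ i)]
  simp only [norm_mul, Complex.norm_real, norm_norm, ← norm_mul_norm_sub_inv_conj hp hω]
  ring

/-- The action of the root ambiguity group `G = S¹ ⋉ (μ₂^N ⋊ S_N)` on the root cover
is well defined — each `sᵢ` is an involution and `τ ∘ s_{τ(j)} = s_j ∘ τ` — and each
of the generators (unimodular scaling, permutation of roots, reflection of a root)
preserves the Fourier intensity function of the associated signal. -/
theorem root_ambiguity_group_action (N : ℕ) :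
    (∀ (i : Fin N) (p : ℂ × (Fin N → ℂ)), (∀ j, p.2 j ≠ 0) →
      reflAct i (reflAct i p) = p) ∧
    (∀ (τ : Equiv.Perm (Fin N)) (j : Fin N) (p : ℂ × (Fin N → ℂ)),
      permAct τ (reflAct (τ j) p) = reflAct j (permAct τ p)) ∧
    (∀ (lam : ℂ), ‖lam‖ = 1 → ∀ (p : ℂ × (Fin N → ℂ)) (ω : ℂ), ‖ω‖ = 1 →
      rootIntensity (scaleAct lam p) ω = rootIntensity p ω) ∧
    (∀ (τ : Equiv.Perm (Fin N)) (p : ℂ × (Fin N → ℂ)) (ω : ℂ), ‖ω‖ = 1 →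
      rootIntensity (permAct τ p) ω = rootIntensity p ω) ∧
    (∀ (i : Fin N) (p : ℂ × (Fin N → ℂ)), (∀ j, p.2 j ≠ 0) → ∀ ω : ℂ, ‖ω‖ = 1 →
      rootIntensity (reflAct i p) ω = rootIntensity p ω) :=
  ⟨fun i _ hp ↦ reflAct_reflAct i (hp i),
    permAct_reflAct,
    fun _ hlam p ω _ ↦ rootIntensity_scaleAct hlam p ω,
    fun τ p ω _ ↦ rootIntensity_permAct τ p ω,
    fun i _ hp _ hω ↦ rootIntensity_reflAct i (hp i) hω⟩
end
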